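/- arXiv:1912.13145 — 5 statements merged into one kernel-verified Lean document; each statement's English description precedes it below -/
import Mathlib

section
/- Let γ, δ > 0 and let θ̂ ∈ ℝ satisfy π/2 + γ ≤ θ̂ ≤ π − γ. Define the set D := {(x₁, x₂) ∈ ℝ² : π/2 + γ ≤ arctan x₁ + arctan x₂ ≤ π − γ} and the function G(x₁, x₂) := arctan x₁ + arctan x₂ − θ̂ − ((cot θ̂ + x₁)/(1 + x₁²) + (cot θ̂ + x₂)/(1 + x₂²)) + (δ/(1 + x₁²) + δ/(1 + x₂²)). Then there exist constants κ > 0 and R > 0 (depending only on γ, δ, θ̂) such that G(x₁, x₂) > κ for every (x₁, x₂) ∈ D with x₁ ≥ R. -/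
open Real

/-- Key monotonicity lemma: for `0 ≤ x`, `0 ≤ c`,
`arctan c - arctan x ≤ (c - x)/(1 + x²)`. -/
lemma arctan_key (x c : ℝ) (hx : 0 ≤ x) (hc : 0 ≤ c) :
    arctan c - arctan x ≤ (c - x) / (1 + x ^ 2) := by
  have hx2 : (0:ℝ) < 1 + x ^ 2 := by positivity
  set F : ℝ → ℝ := fun t => arctan t - t / (1 + x ^ 2) with hF
  have hder : ∀ t : ℝ, HasDerivAt F (1 / (1 + t ^ 2) - 1 / (1 + x ^ 2)) t := by
    intro t
    exact (Real.hasDerivAt_arctan t).sub ((hasDerivAt_id t).div_const (1 + x ^ 2))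
  have hderiv : ∀ t : ℝ, deriv F t = 1 / (1 + t ^ 2) - 1 / (1 + x ^ 2) :=
    fun t => (hder t).deriv
  have hgoal : F c ≤ F x := by
    rcases le_total c x with hcx | hxc
    · have hmono : MonotoneOn F (Set.Icc c x) := by
        apply monotoneOn_of_deriv_nonneg (convex_Icc c x)
        · exact fun t _ => ((hder t).continuousAt).continuousWithinAt
        · exact fun t _ => ((hder t).differentiableAt).differentiableWithinAt
        · intro t ht
          rw [interior_Icc] at ht
          rw [hderiv t]
          have ht2 : t ^ 2 ≤ x ^ 2 := by
            apply pow_le_pow_left₀ (le_trans hc ht.1.le) ht.2.le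
          have : (0:ℝ) < 1 + t ^ 2 := by positivity
          rw [sub_nonneg]
          exact one_div_le_one_div_of_le this (by linarith)
      exact hmono (Set.left_mem_Icc.2 hcx) (Set.right_mem_Icc.2 hcx) hcx
    · have hanti : AntitoneOn F (Set.Icc x c) := by
        apply antitoneOn_of_deriv_nonpos (convex_Icc x c)
        · exact fun t _ => ((hder t).continuousAt).continuousWithinAt
        · exact fun t _ => ((hder t).differentiableAt).differentiableWithinAt
        · intro t ht
          rw [interior_Icc] at ht
          rw [hderiv t]
          have ht2 : x ^ 2 ≤ t ^ 2 := by
            apply pow_le_pow_left₀ hx ht.1.le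
          have : (0:ℝ) < 1 + t ^ 2 := by positivity
          rw [sub_nonpos]
          exact one_div_le_one_div_of_le hx2 (by linarith)
      exact hanti (Set.left_mem_Icc.2 hxc) (Set.right_mem_Icc.2 hxc) hxc
  have : arctan c - c / (1 + x ^ 2) ≤ arctan x - x / (1 + x ^ 2) := hgoal
  have hsd : (c - x) / (1 + x ^ 2) = c / (1 + x ^ 2) - x / (1 + x ^ 2) := by ring
  linarith [hsd.ge]

/-- The C-subsolution-type lemma: for `γ, δ > 0` and `θ̂ ∈ [π/2 + γ, π − γ]`, the function
`G(x₁,x₂) = arctan x₁ + arctan x₂ − θ̂ − Σₚ (cot θ̂ + xₚ)/(1+xₚ²) + Σₚ δ/(1+xₚ²)`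
is bounded below by some `κ > 0` on the region
`D ∩ {x₁ ≥ R}` where `D = {π/2 + γ ≤ arctan x₁ + arctan x₂ ≤ π − γ}`, for some `R > 0`. -/
theorem stmt_0 (γ δ θhat : ℝ) (hγ : 0 < γ) (hδ : 0 < δ)
    (hθ₁ : π / 2 + γ ≤ θhat) (hθ₂ : θhat ≤ π - γ) :
    ∃ κ > 0, ∃ R > 0, ∀ x₁ x₂ : ℝ,
      π / 2 + γ ≤ arctan x₁ + arctan x₂ →
      arctan x₁ + arctan x₂ ≤ π - γ →
      R ≤ x₁ →
      κ < arctan x₁ + arctan x₂ - θhat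
            - ((Real.cot θhat + x₁) / (1 + x₁ ^ 2) + (Real.cot θhat + x₂) / (1 + x₂ ^ 2))
            + (δ / (1 + x₁ ^ 2) + δ / (1 + x₂ ^ 2)) := by
  have hπ : (0:ℝ) < π := pi_pos
  have hγpi : γ ≤ π / 4 := by linarith
  -- basic facts about θhat
  have hθlt : θhat < π := by linarith
  have hθgt : π / 2 < θhat := by linarith
  have hsin : 0 < Real.sin θhat := Real.sin_pos_of_pos_of_lt_pi (by linarith) hθlt
  have hcos : Real.cos θhat < 0 :=
    Real.cos_neg_of_pi_div_two_lt_of_lt hθgt (by linarith)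
  set c : ℝ := -Real.cot θhat with hc
  have hc0 : 0 ≤ c := by
    rw [hc, Real.cot_eq_cos_div_sin]
    have : Real.cos θhat / Real.sin θhat ≤ 0 := div_nonpos_of_nonpos_of_nonneg hcos.le hsin.le
    linarith
  have harcc : arctan c = θhat - π / 2 := by
    have htan : Real.tan (θhat - π / 2) = c := by
      rw [Real.tan_eq_sin_div_cos, Real.sin_sub_pi_div_two, Real.cos_sub_pi_div_two,
        hc, Real.cot_eq_cos_div_sin]
      ring
    rw [← htan, Real.arctan_tan (by linarith) (by linarith)]
  -- constants
  set M : ℝ := Real.tan (π / 2 - γ / 2) with hM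
  have hM0 : 0 < M :=
    Real.tan_pos_of_pos_of_lt_pi_div_two (by linarith) (by linarith)
  have harcM : arctan M = π / 2 - γ / 2 :=
    Real.arctan_tan (by linarith) (by linarith)
  set κ₀ : ℝ := δ / (1 + M ^ 2) with hκ₀
  have hκ₀pos : 0 < κ₀ := by positivity
  set ε₀ : ℝ := min (γ / 2) (κ₀ / 4) with hε₀
  have hε₀pos : 0 < ε₀ := lt_min (by linarith) (by linarith)
  have hε₀γ : ε₀ ≤ γ / 2 := min_le_left _ _
  have hε₀κ : ε₀ ≤ κ₀ / 4 := min_le_right _ _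
  set R : ℝ := max (max c 1) (max (Real.tan (π / 2 - ε₀)) (4 / κ₀)) with hR
  refine ⟨κ₀ / 4, by linarith, R, lt_of_lt_of_le one_pos
    (le_trans (le_max_right c 1) (le_max_left _ _)), ?_⟩
  intro x₁ x₂ h₁ h₂ hRx
  have hx₁c : c ≤ x₁ := le_trans (le_trans (le_max_left c 1) (le_max_left _ _)) hRx
  have hx₁1 : (1:ℝ) ≤ x₁ := le_trans (le_trans (le_max_right c 1) (le_max_left _ _)) hRx
  have hx₁pos : 0 < x₁ := by linarith
  have hx₁κ : 4 / κ₀ ≤ x₁ :=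
    le_trans (le_trans (le_max_right _ _) (le_max_right _ _)) hRx
  have hx₁tan : Real.tan (π / 2 - ε₀) ≤ x₁ :=
    le_trans (le_trans (le_max_left _ _) (le_max_right _ _)) hRx
  -- arctan x₁ ≥ π/2 - ε₀
  have harc1 : π / 2 - ε₀ ≤ arctan x₁ := by
    have := Real.arctan_strictMono.monotone hx₁tan
    rwa [Real.arctan_tan (by linarith) (by linarith)] at this
  have harc1lt : arctan x₁ < π / 2 := Real.arctan_lt_pi_div_two x₁
  -- x₂ > 0
  have harc2pos : 0 < arctan x₂ := by linarith
  have hx₂pos : 0 < x₂ := by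
    by_contra h
    push_neg at h
    have := Real.arctan_strictMono.monotone h
    rw [Real.arctan_zero] at this
    linarith
  -- x₂ ≤ M
  have harc2M : arctan x₂ ≤ arctan M := by
    rw [harcM]; linarith
  have hx₂M : x₂ ≤ M := by
    by_contra h
    push_neg at h
    exact absurd harc2M (not_le.2 (Real.arctan_strictMono h))
  have hx₂sq : x₂ ^ 2 ≤ M ^ 2 := pow_le_pow_left₀ hx₂pos.le hx₂M 2
  have hden1 : (0:ℝ) < 1 + x₁ ^ 2 := by positivity
  have hden2 : (0:ℝ) < 1 + x₂ ^ 2 := by positivity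
  -- δ/(1+x₂²) ≥ κ₀
  have hδ2 : κ₀ ≤ δ / (1 + x₂ ^ 2) := by
    rw [hκ₀]
    apply div_le_div_of_nonneg_left hδ.le hden2
    linarith
  have hδ1 : 0 ≤ δ / (1 + x₁ ^ 2) := by positivity
  -- key estimate for x₂
  have hkey2 : (θhat - π / 2) - arctan x₂ ≤ (c - x₂) / (1 + x₂ ^ 2) := by
    have := arctan_key x₂ c hx₂pos.le hc0
    rwa [harcc] at this
  -- estimate for x₁ : (c - x₁)/(1+x₁²) ≥ -κ₀/4
  have hkey1 : -(κ₀ / 4) ≤ (c - x₁) / (1 + x₁ ^ 2) := by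
    have h1 : (-x₁) / (1 + x₁ ^ 2) ≤ (c - x₁) / (1 + x₁ ^ 2) := by
      gcongr
      linarith
    have h2 : -(1 / x₁) ≤ (-x₁) / (1 + x₁ ^ 2) := by
      rw [neg_div, neg_le_neg_iff, div_le_div_iff₀ hden1 hx₁pos]
      nlinarith
    have h3 : 1 / x₁ ≤ κ₀ / 4 := by
      have h4 : (0:ℝ) < 4 / κ₀ := by positivity
      have := one_div_le_one_div_of_le h4 hx₁κ
      rwa [one_div_div] at this
    linarith
  -- conclude
  have hrw : Real.cot θhat = -c := by rw [hc]; ring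
  rw [hrw]
  have e1 : (-c + x₁) / (1 + x₁ ^ 2) = -((c - x₁) / (1 + x₁ ^ 2)) := by ring
  have e2 : (-c + x₂) / (1 + x₂ ^ 2) = -((c - x₂) / (1 + x₂ ^ 2)) := by ring
  rw [e1, e2]
  linarith
end

section
/- Let n be a natural number, C ≥ 0, λ : Fin n → ℝ, and R : Fin n → Fin n → ℝ a symmetric function (R j ℓ = R ℓ j for all j, ℓ) satisfying R j ℓ ≥ −C for all j ≠ ℓ. Then ∑_{j, ℓ} λ_j (λ_ℓ − λ_j) · R j ℓ / ((1 + λ_j²)(1 + λ_ℓ²)) = − ∑_{j < ℓ} (λ_j − λ_ℓ)² · R j ℓ / ((1 + λ_j²)(1 + λ_ℓ²)) ≤ C·n·(n − 1). -/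
open Finset

/-- Curvature term estimate: for a symmetric `R` with `R j ℓ ≥ −C` off the diagonal (`C ≥ 0`),
`∑_{j,ℓ} λⱼ(λ_ℓ − λⱼ) R j ℓ / ((1+λⱼ²)(1+λ_ℓ²))`
equals `−∑_{j<ℓ} (λⱼ − λ_ℓ)² R j ℓ / ((1+λⱼ²)(1+λ_ℓ²))` and is at most `C n (n−1)`. -/
theorem stmt_6 (n : ℕ) (C : ℝ) (hC : 0 ≤ C) (lam : Fin n → ℝ) (R : Fin n → Fin n → ℝ)
    (hsymm : ∀ j ℓ, R j ℓ = R ℓ j) (hlow : ∀ j ℓ, j ≠ ℓ → -C ≤ R j ℓ) :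
    (∑ j, ∑ ℓ, lam j * (lam ℓ - lam j) * R j ℓ / ((1 + lam j ^ 2) * (1 + lam ℓ ^ 2)) =
      -∑ j, ∑ ℓ ∈ Finset.univ.filter (fun ℓ => j < ℓ),
        (lam j - lam ℓ) ^ 2 * R j ℓ / ((1 + lam j ^ 2) * (1 + lam ℓ ^ 2))) ∧
    (∑ j, ∑ ℓ, lam j * (lam ℓ - lam j) * R j ℓ / ((1 + lam j ^ 2) * (1 + lam ℓ ^ 2)) ≤
      C * n * ((n : ℝ) - 1)) := by
  set g : Fin n → Fin n → ℝ := fun j ℓ =>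
    lam j * (lam ℓ - lam j) * R j ℓ / ((1 + lam j ^ 2) * (1 + lam ℓ ^ 2)) with hg
  have hden : ∀ j : Fin n, (0:ℝ) < 1 + lam j ^ 2 := fun j => by positivity
  have hpair : ∀ j ℓ, g j ℓ + g ℓ j =
      -((lam j - lam ℓ) ^ 2 * R j ℓ / ((1 + lam j ^ 2) * (1 + lam ℓ ^ 2))) := by
    intro j ℓ
    rw [hg]
    simp only
    rw [hsymm ℓ j]
    ring
  have hdiag : ∀ j, g j j = 0 := by
    intro j; simp [hg]
  -- Part 1
  have part1 : ∑ j, ∑ ℓ, g j ℓ =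
      -∑ j, ∑ ℓ ∈ Finset.univ.filter (fun ℓ => j < ℓ),
        (lam j - lam ℓ) ^ 2 * R j ℓ / ((1 + lam j ^ 2) * (1 + lam ℓ ^ 2)) := by
    have hsplit : ∀ j : Fin n, ∑ ℓ, g j ℓ =
        (∑ ℓ ∈ Finset.univ.filter (fun ℓ => j < ℓ), g j ℓ) +
        (∑ ℓ ∈ Finset.univ.filter (fun ℓ => ℓ < j), g j ℓ) := by
      intro j
      rw [← Finset.sum_filter_add_sum_filter_not Finset.univ (fun ℓ => j < ℓ)]
      congr 1
      have : Finset.univ.filter (fun ℓ => ¬ j < ℓ) =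
          insert j (Finset.univ.filter (fun ℓ => ℓ < j)) := by
        ext ℓ
        simp [not_lt, le_iff_lt_or_eq, or_comm, eq_comm]
      rw [this, Finset.sum_insert (by simp), hdiag]
      simp
    have hswap : ∑ j, ∑ ℓ ∈ Finset.univ.filter (fun ℓ => ℓ < j), g j ℓ =
        ∑ j, ∑ ℓ ∈ Finset.univ.filter (fun ℓ => j < ℓ), g ℓ j := by
      rw [Finset.sum_comm' (s' := fun ℓ => Finset.univ.filter (fun j => ℓ < j))
        (t' := Finset.univ)]
      intro x y; simp
    calc ∑ j, ∑ ℓ, g j ℓ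
        = ∑ j, ((∑ ℓ ∈ Finset.univ.filter (fun ℓ => j < ℓ), g j ℓ) +
            (∑ ℓ ∈ Finset.univ.filter (fun ℓ => ℓ < j), g j ℓ)) := by
          exact Finset.sum_congr rfl fun j _ => hsplit j
      _ = (∑ j, ∑ ℓ ∈ Finset.univ.filter (fun ℓ => j < ℓ), g j ℓ) +
            ∑ j, ∑ ℓ ∈ Finset.univ.filter (fun ℓ => j < ℓ), g ℓ j := by
          rw [Finset.sum_add_distrib, hswap]
      _ = ∑ j, ∑ ℓ ∈ Finset.univ.filter (fun ℓ => j < ℓ), (g j ℓ + g ℓ j) := by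
          rw [← Finset.sum_add_distrib]
          exact Finset.sum_congr rfl fun j _ => by rw [← Finset.sum_add_distrib]
      _ = -∑ j, ∑ ℓ ∈ Finset.univ.filter (fun ℓ => j < ℓ),
            (lam j - lam ℓ) ^ 2 * R j ℓ / ((1 + lam j ^ 2) * (1 + lam ℓ ^ 2)) := by
          rw [← Finset.sum_neg_distrib]
          refine Finset.sum_congr rfl fun j _ => ?_
          rw [← Finset.sum_neg_distrib]
          exact Finset.sum_congr rfl fun ℓ _ => by rw [hpair]
  refine ⟨part1, ?_⟩
  -- Part 2
  have hterm : ∀ j ℓ : Fin n, g j ℓ + g ℓ j ≤ if j = ℓ then 0 else 2 * C := by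
    intro j ℓ
    rw [hpair]
    by_cases h : j = ℓ
    · simp [h]
    · simp only [h, if_false]
      have hR : -C ≤ R j ℓ := hlow j ℓ h
      have hs : (lam j - lam ℓ) ^ 2 ≤ 2 * ((1 + lam j ^ 2) * (1 + lam ℓ ^ 2)) := by
        nlinarith [sq_nonneg (lam j + lam ℓ), sq_nonneg (lam j * lam ℓ)]
      have hD : (0:ℝ) < (1 + lam j ^ 2) * (1 + lam ℓ ^ 2) :=
        mul_pos (hden j) (hden ℓ)
      rw [neg_div']
      have h1 : -((lam j - lam ℓ) ^ 2 * R j ℓ) ≤ (lam j - lam ℓ) ^ 2 * C := by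
        nlinarith [sq_nonneg (lam j - lam ℓ)]
      have h2 : -((lam j - lam ℓ) ^ 2 * R j ℓ) / ((1 + lam j ^ 2) * (1 + lam ℓ ^ 2))
          ≤ (lam j - lam ℓ) ^ 2 * C / ((1 + lam j ^ 2) * (1 + lam ℓ ^ 2)) :=
        div_le_div_of_nonneg_right h1 hD.le
      have h3 : (lam j - lam ℓ) ^ 2 * C / ((1 + lam j ^ 2) * (1 + lam ℓ ^ 2)) ≤ 2 * C := by
        rw [div_le_iff₀ hD]
        nlinarith
      exact h2.trans h3
  have hcount : ∀ j : Fin n, ∑ ℓ, (if j = ℓ then (0:ℝ) else 2 * C) = 2 * C * ((n:ℝ) - 1) := by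
    intro j
    have : ∑ ℓ : Fin n, (if j = ℓ then (0:ℝ) else 2 * C) =
        ∑ ℓ : Fin n, (2 * C - if j = ℓ then 2 * C else 0) := by
      refine Finset.sum_congr rfl fun ℓ _ => ?_
      by_cases h : j = ℓ <;> simp [h]
    rw [this, Finset.sum_sub_distrib, Finset.sum_ite_eq Finset.univ j (fun _ => 2 * C)]
    simp
    ring
  have hT : ∑ j, ∑ ℓ, (g j ℓ + g ℓ j) ≤ 2 * (C * n * ((n:ℝ) - 1)) := by
    calc ∑ j, ∑ ℓ, (g j ℓ + g ℓ j)
        ≤ ∑ j : Fin n, ∑ ℓ : Fin n, (if j = ℓ then (0:ℝ) else 2 * C) := by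
          refine Finset.sum_le_sum fun j _ => Finset.sum_le_sum fun ℓ _ => hterm j ℓ
      _ = ∑ j : Fin n, 2 * C * ((n:ℝ) - 1) := Finset.sum_congr rfl fun j _ => hcount j
      _ = 2 * (C * n * ((n:ℝ) - 1)) := by
          rw [Finset.sum_const]
          simp
          ring
  have hdouble : ∑ j, ∑ ℓ, (g j ℓ + g ℓ j) = 2 * ∑ j, ∑ ℓ, g j ℓ := by
    have h1 : ∑ j, ∑ ℓ, (g j ℓ + g ℓ j) = (∑ j, ∑ ℓ, g j ℓ) + ∑ j, ∑ ℓ, g ℓ j := by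
      simp [Finset.sum_add_distrib]
    rw [h1, Finset.sum_comm]
    ring
  linarith [hT, hdouble.symm.le]
end

section
/- Let λ₁, λ₂ ∈ ℝ be such that Θ := arctan λ₁ + arctan λ₂ lies in (π/2, π), let θ̂ ∈ (π/2, π), and set c := cot θ̂, a := 1 − λ₁λ₂, b := λ₁ + λ₂. Then a·sin θ̂·cos θ̂ + b·sin²θ̂ > 0, and Θ − θ̂ = arctan[ ((c + λ₁)(c + λ₂)/(1 + c²) − 1) / (a·sin θ̂·cos θ̂ + b·sin²θ̂) ]. -/
open Real

/-- Key identity in the C⁰-estimate: with `Θ = arctan λ₁ + arctan λ₂ ∈ (π/2, π)`,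
`θ̂ ∈ (π/2, π)`, `c = cot θ̂`, `a = 1 − λ₁λ₂`, `b = λ₁ + λ₂`, one has
`a sin θ̂ cos θ̂ + b sin²θ̂ > 0` and
`Θ − θ̂ = arctan [((c+λ₁)(c+λ₂)/(1+c²) − 1) / (a sin θ̂ cos θ̂ + b sin²θ̂)]`. -/
theorem stmt_7 (lam₁ lam₂ θhat : ℝ)
    (hΘ : Real.arctan lam₁ + Real.arctan lam₂ ∈ Set.Ioo (π / 2) π)
    (hθhat : θhat ∈ Set.Ioo (π / 2) π) :
    0 < (1 - lam₁ * lam₂) * Real.sin θhat * Real.cos θhat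
        + (lam₁ + lam₂) * Real.sin θhat ^ 2 ∧
    Real.arctan lam₁ + Real.arctan lam₂ - θhat =
      Real.arctan
        (((Real.cot θhat + lam₁) * (Real.cot θhat + lam₂) / (1 + Real.cot θhat ^ 2) - 1) /
          ((1 - lam₁ * lam₂) * Real.sin θhat * Real.cos θhat
            + (lam₁ + lam₂) * Real.sin θhat ^ 2)) := by
  obtain ⟨hΘ1, hΘ2⟩ := hΘ
  obtain ⟨hθ1, hθ2⟩ := hθhat
  have hπ : (0:ℝ) < π := Real.pi_pos
  have hθ0 : 0 < θhat := lt_trans (by positivity) hθ1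
  have hsin : 0 < Real.sin θhat := Real.sin_pos_of_pos_of_lt_pi hθ0 hθ2
  have hsinne : Real.sin θhat ≠ 0 := ne_of_gt hsin
  set Θ := Real.arctan lam₁ + Real.arctan lam₂ with hΘdef
  have hφ1 : -(π/2) < Θ - θhat := by linarith
  have hφ2 : Θ - θhat < π/2 := by linarith
  set r₁ := Real.sqrt (1 + lam₁^2) with hr₁def
  set r₂ := Real.sqrt (1 + lam₂^2) with hr₂def
  have hr₁ : (0:ℝ) < r₁ := Real.sqrt_pos.2 (by positivity)
  have hr₂ : (0:ℝ) < r₂ := Real.sqrt_pos.2 (by positivity)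
  have hs₁ : r₁^2 = 1 + lam₁^2 := Real.sq_sqrt (by positivity)
  have hs₂ : r₂^2 = 1 + lam₂^2 := Real.sq_sqrt (by positivity)
  have hcosΘ : Real.cos Θ = (1 - lam₁*lam₂) / (r₁ * r₂) := by
    rw [hΘdef, Real.cos_add, Real.cos_arctan, Real.sin_arctan, Real.cos_arctan,
      Real.sin_arctan, ← hr₁def, ← hr₂def]
    field_simp
  have hsinΘ : Real.sin Θ = (lam₁ + lam₂) / (r₁ * r₂) := by
    rw [hΘdef, Real.sin_add, Real.cos_arctan, Real.sin_arctan, Real.cos_arctan,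
      Real.sin_arctan, ← hr₁def, ← hr₂def]
    field_simp
  have hcosφ : Real.cos (Θ - θhat)
      = ((1 - lam₁*lam₂) * Real.cos θhat + (lam₁ + lam₂) * Real.sin θhat) / (r₁ * r₂) := by
    rw [Real.cos_sub, hcosΘ, hsinΘ]; ring
  have hsinφ : Real.sin (Θ - θhat)
      = ((lam₁ + lam₂) * Real.cos θhat - (1 - lam₁*lam₂) * Real.sin θhat) / (r₁ * r₂) := by
    rw [Real.sin_sub, hcosΘ, hsinΘ]; ring
  have hcosφpos : 0 < Real.cos (Θ - θhat) := Real.cos_pos_of_mem_Ioo ⟨hφ1, hφ2⟩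
  have hD : (1 - lam₁ * lam₂) * Real.sin θhat * Real.cos θhat
        + (lam₁ + lam₂) * Real.sin θhat ^ 2
      = Real.sin θhat * (r₁ * r₂) * Real.cos (Θ - θhat) := by
    rw [hcosφ]; field_simp
  have hDpos : 0 < (1 - lam₁ * lam₂) * Real.sin θhat * Real.cos θhat
        + (lam₁ + lam₂) * Real.sin θhat ^ 2 := by
    rw [hD]; positivity
  refine ⟨hDpos, ?_⟩
  have hsc : Real.sin θhat ^ 2 + Real.cos θhat ^ 2 = 1 := Real.sin_sq_add_cos_sq θhat
  have hN : (Real.cot θhat + lam₁) * (Real.cot θhat + lam₂) / (1 + Real.cot θhat ^ 2) - 1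
      = Real.sin θhat * (r₁ * r₂) * Real.sin (Θ - θhat) := by
    rw [Real.cot_eq_cos_div_sin, hsinφ]
    have h1 : 1 + (Real.cos θhat / Real.sin θhat) ^ 2 = 1 / Real.sin θhat ^ 2 := by
      field_simp
      exact hsc
    rw [h1]
    field_simp
    linear_combination hsc
  rw [hN, hD]
  have hKne : Real.sin θhat * (r₁ * r₂) ≠ 0 := by positivity
  rw [mul_div_mul_left _ _ hKne, ← Real.tan_eq_sin_div_cos,
    Real.arctan_tan hφ1 hφ2]
end

section
/- Let L > 0 and m > 1 be real numbers and define G : ℝ² → ℝ by G(s, t) := s·((1 − m²)L − s² + t²) + 2t·(mL − st). Then there exist ε > 0 and a C^∞ function τ : (−ε, ε) → ℝ such that: τ(0) = 0; G(s, τ(s)) = 0 for all |s| < ε; τ'(0) = (m² − 1)/(2m); and for every s ∈ (0, ε), one has τ(s) > 0, mL − s·τ(s) > 0, and, setting c(s) := ((1 − m²)L − s² + τ(s)²)/(2(mL − s·τ(s))), the identities c(s)·s + τ(s) = 0 and c(s) + m > 0 hold. -/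
open Real

/-- The blowup construction: for `L > 0`, `m > 1` and
`G(s,t) = s((1−m²)L − s² + t²) + 2t(mL − st)`, there are `ε > 0` and a `C^∞` function
`τ` on `(−ε, ε)` with `τ(0) = 0`, `G(s, τ(s)) = 0`, `τ'(0) = (m²−1)/(2m)`, and for
`s ∈ (0, ε)`: `τ(s) > 0`, `mL − sτ(s) > 0`, and with
`c(s) = ((1−m²)L − s² + τ(s)²)/(2(mL − sτ(s)))` one has `c(s)s + τ(s) = 0` and
`c(s) + m > 0`. -/
theorem stmt_9 (L m : ℝ) (hL : 0 < L) (hm : 1 < m) :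
    ∃ ε > 0, ∃ τ : ℝ → ℝ,
      ContDiffOn ℝ (⊤ : ℕ∞) τ (Set.Ioo (-ε) ε) ∧
      τ 0 = 0 ∧
      (∀ s ∈ Set.Ioo (-ε) ε,
        s * ((1 - m ^ 2) * L - s ^ 2 + τ s ^ 2) + 2 * τ s * (m * L - s * τ s) = 0) ∧
      HasDerivAt τ ((m ^ 2 - 1) / (2 * m)) 0 ∧
      (∀ s ∈ Set.Ioo 0 ε,
        0 < τ s ∧
        0 < m * L - s * τ s ∧
        (((1 - m ^ 2) * L - s ^ 2 + τ s ^ 2) / (2 * (m * L - s * τ s))) * s + τ s = 0 ∧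
        0 < ((1 - m ^ 2) * L - s ^ 2 + τ s ^ 2) / (2 * (m * L - s * τ s)) + m) := by
  have hm0 : 0 < m := lt_trans one_pos hm
  have hm2 : 1 < m^2 := by nlinarith
  set D : ℝ → ℝ := fun s => m^2*L^2 + s^2*((1-m^2)*L - s^2) with hDdef
  set τ : ℝ → ℝ := fun s => s * ((m^2-1)*L + s^2) / (m*L + Real.sqrt (D s)) with hτdef
  have hsq : ∀ s : ℝ, s ∈ Set.Ioo (-Real.sqrt L) (Real.sqrt L) → s^2 < L := by
    intro s hs
    have h1 : |s| < Real.sqrt L := abs_lt.mpr ⟨hs.1, hs.2⟩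
    calc s^2 = |s|^2 := (sq_abs s).symm
    _ < (Real.sqrt L)^2 := by
        apply pow_lt_pow_left₀ h1 (abs_nonneg s)
        norm_num
    _ = L := Real.sq_sqrt hL.le
  have hDpos : ∀ s : ℝ, s^2 < L → 0 < D s := by
    intro s hs
    simp only [hDdef]
    nlinarith [mul_lt_mul_of_pos_left hs (show (0:ℝ) < (m^2-1)*L by nlinarith),
      mul_le_mul_of_nonneg_left hs.le (sq_nonneg s),
      mul_lt_mul_of_pos_right hs hL, sq_nonneg s]
  have hNpos : ∀ s : ℝ, s^2 < L → 0 < m*L + Real.sqrt (D s) := by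
    intro s hs
    have := Real.sqrt_nonneg (D s)
    nlinarith
  -- the basic algebraic relation: τ s * N = s * A
  have hu : ∀ s : ℝ, s^2 < L →
      τ s * (m*L + Real.sqrt (D s)) = s * ((m^2-1)*L + s^2) := by
    intro s hs
    simp only [hτdef]
    field_simp
  -- the G identity
  have hG : ∀ s : ℝ, s^2 < L →
      s * ((1 - m ^ 2) * L - s ^ 2 + τ s ^ 2) + 2 * τ s * (m * L - s * τ s) = 0 := by
    intro s hs
    have hD := hDpos s hs
    have hN := hNpos s hs
    have hsq' : Real.sqrt (D s) * Real.sqrt (D s) = m^2*L^2 + s^2*((1-m^2)*L - s^2) := by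
      rw [Real.mul_self_sqrt hD.le]
    set r := Real.sqrt (D s) with hr
    set t := τ s with ht
    have hu' := hu s hs
    rw [← hr] at hu'
    have h0 : (s * ((1 - m ^ 2) * L - s ^ 2 + t ^ 2) + 2 * t * (m * L - s * t))
        * (m*L + r)^2 = 0 := by
      linear_combination (2*m*L*(m*L+r) - 2*s^2*((m^2-1)*L + s^2)
        - s*(t*(m*L+r) - s*((m^2-1)*L + s^2))) * hu'
        + (-(s*((m^2-1)*L + s^2))) * hsq'
    have := mul_eq_zero.mp h0
    rcases this with h | h
    · exact h
    · exact absurd h (pow_ne_zero 2 hN.ne')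
  -- the key: m L - s τ s = √(D s)
  have hkey : ∀ s : ℝ, s^2 < L → m*L - s * τ s = Real.sqrt (D s) := by
    intro s hs
    have hD := hDpos s hs
    have hN := hNpos s hs
    have hsq' : Real.sqrt (D s) * Real.sqrt (D s) = m^2*L^2 + s^2*((1-m^2)*L - s^2) := by
      rw [Real.mul_self_sqrt hD.le]
    set r := Real.sqrt (D s) with hr
    set t := τ s with ht
    have hu' := hu s hs
    rw [← hr] at hu'
    have h0 : (m*L - s*t - r) * (m*L + r) = 0 := by
      linear_combination (-s) * hu' - hsq'
    rcases mul_eq_zero.mp h0 with h | h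
    · linarith [sub_eq_zero.mp (by linarith : m*L - s*t - r = 0)]
    · exact absurd h hN.ne'
  -- the relation (τ² - A) N = -2 A r
  have h5 : ∀ s : ℝ, s^2 < L →
      (τ s^2 - ((m^2-1)*L + s^2)) * (m*L + Real.sqrt (D s))
        = -2*((m^2-1)*L + s^2)*Real.sqrt (D s) := by
    intro s hs
    have hD := hDpos s hs
    have hN := hNpos s hs
    have hsq' : Real.sqrt (D s) * Real.sqrt (D s) = m^2*L^2 + s^2*((1-m^2)*L - s^2) := by
      rw [Real.mul_self_sqrt hD.le]
    set r := Real.sqrt (D s) with hr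
    set t := τ s with ht
    have hu' := hu s hs
    rw [← hr] at hu'
    have h0 : ((t^2 - ((m^2-1)*L + s^2)) * (m*L + r) + 2*((m^2-1)*L + s^2)*r)
        * (m*L + r) = 0 := by
      linear_combination (s*((m^2-1)*L + s^2) + t*(m*L+r)) * hu'
        + ((m^2-1)*L + s^2) * hsq'
    rcases mul_eq_zero.mp h0 with h | h
    · linarith
    · exact absurd h hN.ne'
  refine ⟨Real.sqrt L, Real.sqrt_pos.mpr hL, τ, ?_, ?_, ?_, ?_, ?_⟩
  · -- smoothness
    intro s hs
    have hs2 := hsq s hs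
    have hD := hDpos s hs2
    have hN := hNpos s hs2
    have hDc : ContDiff ℝ (⊤ : ℕ∞) D := by
      simp only [hDdef]; fun_prop
    have hsqrtD : ContDiffAt ℝ (⊤ : ℕ∞) (fun s => Real.sqrt (D s)) s :=
      (Real.contDiffAt_sqrt hD.ne').comp s hDc.contDiffAt
    have : ContDiffAt ℝ (⊤ : ℕ∞) τ s := by
      apply ContDiffAt.div
      · fun_prop
      · exact contDiffAt_const.add hsqrtD
      · exact hN.ne'
    exact this.contDiffWithinAt
  · simp [hτdef]
  · intro s hs
    exact hG s (hsq s hs)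
  · -- derivative at 0
    have hD0 : D 0 = m^2*L^2 := by simp [hDdef]
    have hD0pos : (0:ℝ) < D 0 := by rw [hD0]; positivity
    have hnum : HasDerivAt (fun s : ℝ => s * ((m^2-1)*L + s^2)) ((m^2-1)*L) 0 := by
      have := (hasDerivAt_id (0:ℝ)).mul
        ((hasDerivAt_const (0:ℝ) ((m^2-1)*L)).add (hasDerivAt_pow 2 0))
      simpa [Pi.mul_def, Pi.add_def] using this
    have hDder : HasDerivAt D 0 0 := by
      have := (hasDerivAt_const (0:ℝ) (m^2*L^2)).add
        ((hasDerivAt_pow 2 (0:ℝ)).mul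
          ((hasDerivAt_const (0:ℝ) ((1-m^2)*L)).sub (hasDerivAt_pow 2 0)))
      simpa [hDdef, Pi.mul_def, Pi.add_def, Pi.sub_def] using this
    have hsder : HasDerivAt (fun s => Real.sqrt (D s)) 0 0 := by
      have := (Real.hasDerivAt_sqrt hD0pos.ne').comp 0 hDder
      simpa [Function.comp_def] using this
    have hden : HasDerivAt (fun s => m*L + Real.sqrt (D s)) 0 0 := by
      simpa [Pi.add_def] using (hasDerivAt_const (0:ℝ) (m*L)).add hsder
    have hden0 : m*L + Real.sqrt (D 0) = 2*(m*L) := by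
      rw [hD0, show m^2*L^2 = (m*L)^2 by ring, Real.sqrt_sq (by positivity)]
      ring
    have hden0ne : m*L + Real.sqrt (D 0) ≠ 0 := by rw [hden0]; positivity
    have := hnum.div hden hden0ne
    have hτd : HasDerivAt τ
        (((m^2-1)*L * (m*L + Real.sqrt (D 0)) - 0 * ((m^2-1)*L + 0^2) * 0)
          / (m*L + Real.sqrt (D 0))^2) 0 := by
      simpa [hτdef, Pi.div_def] using this
    convert hτd using 1
    rw [hden0]
    field_simp
    ring
  · -- positivity statements
    intro s hs
    have hs2 : s^2 < L := hsq s ⟨by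
      have h0 : (0:ℝ) < Real.sqrt L := Real.sqrt_pos.mpr hL
      linarith [hs.1], hs.2⟩
    have hspos : 0 < s := hs.1
    have hD := hDpos s hs2
    have hN := hNpos s hs2
    have hrpos : 0 < Real.sqrt (D s) := Real.sqrt_pos.mpr hD
    set r := Real.sqrt (D s) with hr
    have hApos : 0 < (m^2-1)*L + s^2 := by nlinarith
    have hτpos : 0 < τ s := by
      simp only [hτdef]; positivity
    have hk := hkey s hs2
    rw [← hr] at hk
    refine ⟨hτpos, by rw [hk]; exact hrpos, ?_, ?_⟩
    · have hGs := hG s hs2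
      rw [hk] at hGs ⊢
      field_simp at hGs ⊢
      linarith
    · rw [hk]
      have h5' := h5 s hs2
      rw [← hr] at h5'
      set t := τ s with ht
      clear_value t
      clear_value r
      have hpos : 0 < (1 - m ^ 2) * L - s ^ 2 + t ^ 2 + 2*r*m := by
        nlinarith [h5', mul_pos hrpos (show (0:ℝ) < L - s^2 + m*r by nlinarith), hN,
          mul_pos hrpos hN]
      have heq : ((1 - m ^ 2) * L - s ^ 2 + t ^ 2) / (2 * r) + m
          = ((1 - m ^ 2) * L - s ^ 2 + t ^ 2 + 2*r*m) / (2 * r) := by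
        field_simp
      rw [heq]
      positivity
end

section
/- Let V be a real vector space, q : V → V → ℝ a symmetric bilinear form, and a ∈ V with q(a, a) > 0, such that q(w, w) ≤ 0 for every w ∈ V with q(a, w) = 0. Then for every f ∈ V, the complex number Z := (q(a, a) − q(f, f)) + 2i·q(a, f) does not lie on the nonpositive real axis (−∞, 0]; in particular Z ≠ 0. -/
/-- Linear-algebra form of the Hodge index argument: let `q` be a symmetric bilinear form
on a real vector space `V`, `a ∈ V` with `q(a,a) > 0`, and suppose `q(w,w) ≤ 0` whenever
`q(a,w) = 0`. Then for any `f ∈ V` the complex number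
`Z = (q(a,a) − q(f,f)) + 2i q(a,f)` avoids the nonpositive real axis; in particular `Z ≠ 0`. -/
theorem stmt_11 {V : Type*} [AddCommGroup V] [Module ℝ V]
    (q : V →ₗ[ℝ] V →ₗ[ℝ] ℝ) (hsymm : ∀ v w, q v w = q w v)
    (a : V) (ha : 0 < q a a) (hneg : ∀ w, q a w = 0 → q w w ≤ 0) (f : V) :
    (¬((((q a a - q f f : ℝ) : ℂ) + 2 * Complex.I * ((q a f : ℝ) : ℂ)).im = 0 ∧
        (((q a a - q f f : ℝ) : ℂ) + 2 * Complex.I * ((q a f : ℝ) : ℂ)).re ≤ 0)) ∧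
    ((q a a - q f f : ℝ) : ℂ) + 2 * Complex.I * ((q a f : ℝ) : ℂ) ≠ 0 := by
  have him : ((((q a a - q f f : ℝ) : ℂ) + 2 * Complex.I * ((q a f : ℝ) : ℂ)).im) = 2 * q a f := by
    simp
  have hre : ((((q a a - q f f : ℝ) : ℂ) + 2 * Complex.I * ((q a f : ℝ) : ℂ)).re) = q a a - q f f := by
    simp
  have key : ¬((((q a a - q f f : ℝ) : ℂ) + 2 * Complex.I * ((q a f : ℝ) : ℂ)).im = 0 ∧
      (((q a a - q f f : ℝ) : ℂ) + 2 * Complex.I * ((q a f : ℝ) : ℂ)).re ≤ 0) := by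
    rintro ⟨h1, h2⟩
    rw [him] at h1
    rw [hre] at h2
    have haf : q a f = 0 := by linarith
    have := hneg f haf
    linarith
  refine ⟨key, fun h => key ⟨by rw [h]; simp, by rw [h]; simp⟩⟩
end
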